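/- arXiv:2005.03484 — 5 statements merged into one kernel-verified Lean document; each statement's English description precedes it below -/
import Mathlib

section
/- If S ⊆ {1, ..., N} is a Sidon set, then |S| ≤ 2√N + 2, i.e. |S|² ≤ 2N + 2|S|. -/
/-!
Distinct ordered pairs of a Sidon set have distinct differences, and for `S ⊆ [1, N]` these are
nonzero integers in `[1 - N, N - 1]`. Hence `|S| (|S| - 1) ≤ 2N - 2`.
-/

open Finset

def IsSidon {α : Type*} [AddGroup α] (S : Finset α) : Prop :=
  ∀ x ∈ S, ∀ x' ∈ S, ∀ y ∈ S, ∀ y' ∈ S, x - x' = y - y' → x = y ∨ x = x'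

theorem IsSidon.injOn_sub_offDiag {α : Type*} [AddGroup α] [DecidableEq α] {S : Finset α}
    (hS : IsSidon S) : Set.InjOn (fun p : α × α => p.1 - p.2) S.offDiag := by
  rintro ⟨x, x'⟩ hx ⟨y, y'⟩ hy hxy
  simp only [coe_offDiag, Set.mem_offDiag, mem_coe] at hx hy
  obtain rfl : x = y := (hS x hx.1 x' hx.2.1 y hy.1 y' hy.2.1 hxy).resolve_right hx.2.2
  simp_all

theorem card_Icc_neg_erase_zero (d : ℤ) : #((Icc (-d) d).erase 0) = 2 * d.toNat := by
  rw [card_erase_eq_ite, Int.card_Icc]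
  split_ifs with h0 <;> simp only [mem_Icc] at h0 <;> omega

theorem IsSidon.card_offDiag_le {S : Finset ℤ} (hS : IsSidon S) {a b : ℤ} (hab : S ⊆ Icc a b) :
    #S.offDiag ≤ 2 * (b - a).toNat := by
  rw [← card_Icc_neg_erase_zero]
  refine card_le_card_of_injOn _ (fun p hp => ?_) hS.injOn_sub_offDiag
  simp only [coe_offDiag, Set.mem_offDiag, mem_coe] at hp
  obtain ⟨hx, hy, hne⟩ := hp
  have hx := mem_Icc.mp (hab hx)
  have hy := mem_Icc.mp (hab hy)
  simp only [coe_erase, coe_Icc, Set.mem_sdiff, Set.mem_Icc, Set.mem_singleton_iff]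
  omega

theorem sidon_card_bound (N : ℕ) (S : Finset ℤ) (hS : S ⊆ Finset.Icc 1 (N : ℤ))
    (hSidon : ∀ x ∈ S, ∀ x' ∈ S, ∀ y ∈ S, ∀ y' ∈ S, x - x' = y - y' → x = y ∨ x = x') :
    S.card ^ 2 ≤ 2 * N + 2 * S.card := by
  have hpairs := IsSidon.card_offDiag_le hSidon hS
  rw [offDiag_card] at hpairs
  rw [sq]
  generalize #S * #S = m at hpairs ⊢
  omega
end

section
/- Let s ≥ 5, let a₁, ..., a_s be nonzero integers, and let ν : ℤ → [0, ∞) be supported on an interval of length N with Σ_n ν(n) ≤ N and E(ν) ≤ N³. Then for any functions f₁, ..., f_s : ℤ → ℂ with |f_i| ≤ ν pointwise, the sum Σ_{a₁x₁ + ... + a_s x_s = 0} f₁(x₁)···f_s(x_s) has absolute value at most N^{s-2} · min_i ‖f̂_i‖_∞. -/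
/-!
Average over the `M`-th roots of unity, with `M` larger than every linear form that occurs:
then `∑_{k<M} ∏ⱼ f̂ⱼ(aⱼk/M)` is exactly `M` times the number of weighted solutions, and
`∑_{k<M} |f̂ⱼ(aⱼk/M)|⁴` is at most `M · E(ν) ≤ M N³`. In each product `∏ⱼ f̂ⱼ(aⱼk/M)` bound the
factor `i` by `‖f̂ᵢ‖_∞`, four further factors by AM–GM, `|f̂₁ ⋯ f̂₄| ≤ ∑ |f̂ⱼ|⁴ / 4`, and the remaining
`s - 5` trivially by `∑ ν ≤ N`; summing over `k` gives `M N^{s-2} ‖f̂ᵢ‖_∞`.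
-/

open Finset Complex ComplexConjugate
open scoped Real

/-- `expSum S f id` is the paper's `f̂` for `f` supported on `S`; other phases `L` make products
of such sums sums of the same shape. -/
noncomputable def expSum {β : Type*} (X : Finset β) (w : β → ℂ) (L : β → ℤ) (α : ℝ) : ℂ :=
  ∑ x ∈ X, w x * exp (2 * π * I * α * L x)

def additiveEnergy (S : Finset ℤ) (ν : ℤ → ℝ) : ℝ :=
  ∑ p ∈ (S ×ˢ S ×ˢ S ×ˢ S).filter (fun p => p.1 - p.2.1 = p.2.2.1 - p.2.2.2),
    ν p.1 * ν p.2.1 * ν p.2.2.1 * ν p.2.2.2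

lemma norm_exp_two_pi_I_mul_mul (α : ℝ) (m : ℤ) : ‖exp (2 * π * I * α * m)‖ = 1 := by
  rw [show 2 * π * I * α * m = ((2 * π * α * m : ℝ) : ℂ) * I by push_cast; ring]
  exact norm_exp_ofReal_mul_I _

lemma sum_range_exp_eq_ite (M : ℕ) (t : ℤ) :
    ∑ k ∈ range M, exp (2 * π * I * ((k / M : ℝ) : ℂ) * t) =
      if (M : ℤ) ∣ t then (M : ℂ) else 0 := by
  rcases Nat.eq_zero_or_pos M with rfl | hM
  · simp
  have hζ := isPrimitiveRoot_exp M hM.ne'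
  set z := exp (2 * π * I / M) ^ t
  have hz : ∀ k : ℕ, exp (2 * π * I * ((k / M : ℝ) : ℂ) * t) = z ^ k := by
    intro k
    rw [← zpow_natCast, ← zpow_mul, ← exp_int_mul]
    push_cast
    ring_nf
  simp only [hz]
  split_ifs with hdvd
  · simp [z, (hζ.zpow_eq_one_iff_dvd t).2 hdvd]
  · have hz1 : z ≠ 1 := mt (hζ.zpow_eq_one_iff_dvd t).1 hdvd
    have hzM : z ^ M = 1 := by
      rw [← zpow_natCast, ← zpow_mul, mul_comm t, zpow_mul, zpow_natCast, hζ.pow_eq_one, one_zpow]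
    rw [geom_sum_eq hz1, hzM, sub_self, zero_div]

section expSum

variable {β γ : Type*} (X : Finset β) (w : β → ℂ) (L : β → ℤ) (α : ℝ)

lemma norm_expSum_le : ‖expSum X w L α‖ ≤ ∑ x ∈ X, ‖w x‖ :=
  (norm_sum_le _ _).trans_eq <| sum_congr rfl fun x _ => by
    rw [norm_mul, norm_exp_two_pi_I_mul_mul, mul_one]

lemma expSum_mul_left (a : ℤ) : expSum X w L (a * α) = expSum X w (fun x => a * L x) α := by
  unfold expSum
  push_cast
  ring_nf

lemma conj_expSum : conj (expSum X w L α) = expSum X (fun x => conj (w x)) (fun x => -L x) α := by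
  simp only [expSum, map_sum, map_mul, ← exp_conj]
  push_cast
  simp only [conj_ofReal, conj_I, map_ofNat, map_intCast]
  ring_nf

lemma expSum_mul_expSum (Y : Finset γ) (v : γ → ℂ) (K : γ → ℤ) :
    expSum X w L α * expSum Y v K α =
      expSum (X ×ˢ Y) (fun p => w p.1 * v p.2) (fun p => L p.1 + K p.2) α := by
  rw [expSum, expSum, sum_mul_sum, expSum, sum_product]
  refine sum_congr rfl fun x _ => sum_congr rfl fun y _ => ?_
  push_cast
  rw [mul_add, exp_add]
  ring

lemma prod_expSum {ι : Type*} [Fintype ι] [DecidableEq ι] (X : ι → Finset β) (w : ι → β → ℂ)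
    (L : ι → β → ℤ) :
    ∏ j, expSum (X j) (w j) (L j) α =
      expSum (Fintype.piFinset X) (fun x => ∏ j, w j (x j)) (fun x => ∑ j, L j (x j)) α := by
  simp only [expSum, prod_univ_sum, prod_mul_distrib, ← exp_sum]
  refine sum_congr rfl fun x _ => ?_
  push_cast
  rw [mul_sum]

lemma sum_range_expSum (M : ℕ) (hL : ∀ x ∈ X, |L x| < M) :
    ∑ k ∈ range M, expSum X w L (k / M) = M * ∑ x ∈ X with L x = 0, w x := by
  simp only [expSum]
  rw [sum_comm, sum_filter, mul_sum]
  refine sum_congr rfl fun x hx => ?_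
  rw [← mul_sum, sum_range_exp_eq_ite]
  have hdvd : (M : ℤ) ∣ L x ↔ L x = 0 :=
    ⟨fun h => Int.eq_zero_of_abs_lt_dvd h (hL x hx), fun h => h ▸ dvd_zero _⟩
  simp only [hdvd]
  split_ifs <;> ring

lemma ofReal_norm_expSum_pow_four :
    ((‖expSum X w L α‖ ^ 4 : ℝ) : ℂ) =
      expSum (X ×ˢ X ×ˢ X ×ˢ X)
        (fun p => w p.1 * (conj (w p.2.1) * (conj (w p.2.2.1) * w p.2.2.2)))
        (fun p => L p.1 + (-L p.2.1 + (-L p.2.2.1 + L p.2.2.2))) α := by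
  set F := expSum X w L α
  have hF : ((‖F‖ ^ 4 : ℝ) : ℂ) = F * (conj F * (conj F * F)) := by
    rw [show F * (conj F * (conj F * F)) = F * conj F * (F * conj F) by ring, mul_conj,
      normSq_eq_norm_sq]
    push_cast
    ring
  rw [hF, conj_expSum, expSum_mul_expSum, expSum_mul_expSum, expSum_mul_expSum]

end expSum

lemma sum_range_norm_expSum_pow_four_le (S : Finset ℤ) (g : ℤ → ℂ) (ν : ℤ → ℝ)
    (hg : ∀ n, ‖g n‖ ≤ ν n) {a : ℤ} (ha : a ≠ 0) {M : ℕ} (hM : ∀ x ∈ S, 4 * |a * x| < M) :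
    ∑ k ∈ range M, ‖expSum S g id (a * (k / M))‖ ^ 4 ≤ M * additiveEnergy S ν := by
  have hν : ∀ n, 0 ≤ ν n := fun n => (norm_nonneg _).trans (hg n)
  have hphase : ∀ p ∈ S ×ˢ S ×ˢ S ×ˢ S,
      |a * p.1 + (-(a * p.2.1) + (-(a * p.2.2.1) + a * p.2.2.2))| < M := by
    simp only [mem_product]
    rintro ⟨x, y, z, u⟩ ⟨hx, hy, hz, hu⟩
    have := abs_add_le (a * x) (-(a * y) + (-(a * z) + a * u))
    have := abs_add_le (-(a * y)) (-(a * z) + a * u)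
    have := abs_add_le (-(a * z)) (a * u)
    simp only [abs_neg] at *
    linarith [hM x hx, hM y hy, hM z hz, hM u hu]
  have hzero : ∀ p : ℤ × ℤ × ℤ × ℤ,
      a * p.1 + (-(a * p.2.1) + (-(a * p.2.2.1) + a * p.2.2.2)) = 0 ↔
        p.1 - p.2.1 = p.2.2.1 - p.2.2.2 := by
    rintro ⟨x, y, z, u⟩
    rw [show a * x + (-(a * y) + (-(a * z) + a * u)) = a * (x - y - (z - u)) by ring,
      mul_eq_zero, sub_eq_zero, or_iff_right ha]
  have hmoment : ((∑ k ∈ range M, ‖expSum S g id (a * (k / M))‖ ^ 4 : ℝ) : ℂ) =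
      M * ∑ p ∈ (S ×ˢ S ×ˢ S ×ˢ S).filter (fun p => p.1 - p.2.1 = p.2.2.1 - p.2.2.2),
        g p.1 * (conj (g p.2.1) * (conj (g p.2.2.1) * g p.2.2.2)) := by
    rw [ofReal_sum]
    simp only [expSum_mul_left, ofReal_norm_expSum_pow_four, id]
    rw [sum_range_expSum _ _ _ M hphase, filter_congr fun p _ => hzero p]
  calc ∑ k ∈ range M, ‖expSum S g id (a * (k / M))‖ ^ 4
      = ‖((∑ k ∈ range M, ‖expSum S g id (a * (k / M))‖ ^ 4 : ℝ) : ℂ)‖ := by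
        rw [norm_real, Real.norm_of_nonneg (by positivity)]
    _ ≤ M * additiveEnergy S ν := by
        rw [hmoment, norm_mul, norm_natCast]
        refine mul_le_mul_of_nonneg_left ((norm_sum_le _ _).trans (sum_le_sum fun p _ => ?_))
          (by positivity)
        simp only [norm_mul, norm_conj, ← mul_assoc]
        apply_rules [mul_le_mul, mul_nonneg, norm_nonneg]

lemma prod_le_sum_pow_card_div_card {ι : Type*} (Q : Finset ι) (hQ : Q.Nonempty) (b : ι → ℝ)
    (hb : ∀ j ∈ Q, 0 ≤ b j) : ∏ j ∈ Q, b j ≤ (∑ j ∈ Q, b j ^ #Q) / #Q := by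
  have hn : (#Q : ℝ) ≠ 0 := by simpa using hQ.ne_empty
  have hamgm := Real.geom_mean_le_arith_mean_weighted Q (fun _ => (#Q : ℝ)⁻¹) (fun j => b j ^ #Q)
    (fun _ _ => by positivity) (by simp [hn]) (fun j hj => pow_nonneg (hb j hj) _)
  rwa [prod_congr rfl fun j hj => Real.pow_rpow_inv_natCast (hb j hj) (by simpa using hn),
    ← mul_sum, inv_mul_eq_div] at hamgm

lemma prod_le_mul_pow_mul_sum_pow_card {ι : Type*} [Fintype ι] [DecidableEq ι] (b : ι → ℝ)
    (hb : ∀ j, 0 ≤ b j) {N : ℝ} (hbN : ∀ j, b j ≤ N) {i : ι} {Q : Finset ι}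
    (hQi : Q ⊆ univ.erase i) (hQ : Q.Nonempty) :
    ∏ j, b j ≤ b i * (N ^ (Fintype.card ι - 1 - #Q) * ((∑ j ∈ Q, b j ^ #Q) / #Q)) := by
  have hrest : ∏ j ∈ univ.erase i \ Q, b j ≤ N ^ (Fintype.card ι - 1 - #Q) := by
    calc ∏ j ∈ univ.erase i \ Q, b j ≤ ∏ j ∈ univ.erase i \ Q, N :=
          prod_le_prod (fun j _ => hb j) fun j _ => hbN j
      _ = N ^ (Fintype.card ι - 1 - #Q) := by
          rw [prod_const, card_sdiff_of_subset hQi, card_erase_of_mem (mem_univ i), card_univ]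
  calc ∏ j, b j = b i * ((∏ j ∈ univ.erase i \ Q, b j) * ∏ j ∈ Q, b j) := by
        rw [prod_sdiff hQi, mul_prod_erase _ _ (mem_univ i)]
    _ ≤ _ := mul_le_mul_of_nonneg_left (mul_le_mul hrest
          (prod_le_sum_pow_card_div_card Q hQ b fun j _ => hb j) (prod_nonneg fun j _ => hb j)
          (pow_nonneg ((hb i).trans (hbN i)) _)) (hb i)

lemma sum_range_prod_expSum {ι : Type*} [Fintype ι] [DecidableEq ι] (S : Finset ℤ) (a : ι → ℤ)
    (f : ι → ℤ → ℂ) (M : ℕ) (hM : ∀ x ∈ Fintype.piFinset fun _ => S, |∑ j, a j * x j| < M) :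
    ∑ k ∈ range M, ∏ j, expSum S (f j) id (a j * (k / M)) =
      M * ∑ x ∈ (Fintype.piFinset fun _ => S).filter (fun x => ∑ j, a j * x j = 0),
        ∏ j, f j (x j) := by
  simp only [expSum_mul_left, prod_expSum, id]
  exact sum_range_expSum _ _ _ M hM

lemma exists_modulus_gt_phases {ι : Type*} [Fintype ι] [DecidableEq ι] (S : Finset ℤ) (a : ι → ℤ) :
    ∃ M : ℕ, 0 < M ∧ (∀ x ∈ Fintype.piFinset fun _ => S, |∑ j, a j * x j| < M) ∧
      ∀ j, ∀ x ∈ S, 4 * |a j * x| < M := by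
  set T := ∑ j, ∑ y ∈ S, (a j * y).natAbs
  have hterm : ∀ j, ∀ x ∈ S, (a j * x).natAbs ≤ ∑ y ∈ S, (a j * y).natAbs := fun j x hx =>
    single_le_sum (f := fun y => (a j * y).natAbs) (fun _ _ => Nat.zero_le _) hx
  have hrow : ∀ j, ∑ y ∈ S, (a j * y).natAbs ≤ T := fun j =>
    single_le_sum (f := fun j => ∑ y ∈ S, (a j * y).natAbs) (fun _ _ => Nat.zero_le _)
      (mem_univ j)
  refine ⟨4 * T + 1, by omega, fun x hx => ?_, fun j x hx => ?_⟩
  · have hle : (∑ j, a j * x j).natAbs ≤ T := (Int.natAbs_sum_le _ _).trans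
      (sum_le_sum fun j _ => hterm j _ (Fintype.mem_piFinset.1 hx j))
    rw [Int.abs_eq_natAbs]
    exact_mod_cast (by omega : _ < 4 * T + 1)
  · have hle := (hterm j x hx).trans (hrow j)
    rw [Int.abs_eq_natAbs]
    exact_mod_cast (by omega : _ < 4 * T + 1)

theorem norm_sum_linear_solutions_le {ι : Type*} [Fintype ι] [DecidableEq ι]
    (hι : 5 ≤ Fintype.card ι) (S : Finset ℤ) (a : ι → ℤ) (ha : ∀ j, a j ≠ 0) (N : ℝ)
    (ν : ℤ → ℝ) (hmass : ∑ n ∈ S, ν n ≤ N) (hE : additiveEnergy S ν ≤ N ^ 3)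
    (f : ι → ℤ → ℂ) (hf : ∀ j n, ‖f j n‖ ≤ ν n) (i : ι) :
    ‖∑ x ∈ (Fintype.piFinset fun _ => S).filter (fun x => ∑ j, a j * x j = 0), ∏ j, f j (x j)‖ ≤
      N ^ (Fintype.card ι - 2) * ⨆ α : ℝ, ‖expSum S (f i) id α‖ := by
  set B := ⨆ α : ℝ, ‖expSum S (f i) id α‖
  have hFN : ∀ j α, ‖expSum S (f j) id α‖ ≤ N := fun j α =>
    (norm_expSum_le _ _ _ _).trans ((sum_le_sum fun n _ => hf j n).trans hmass)
  have hN : 0 ≤ N := (norm_nonneg _).trans (hFN i 0)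
  have hB : ∀ α, ‖expSum S (f i) id α‖ ≤ B :=
    le_ciSup ⟨N, by rintro _ ⟨α, rfl⟩; exact hFN i α⟩
  obtain ⟨Q, hQi, hQ⟩ : ∃ Q ⊆ univ.erase i, #Q = 4 :=
    exists_subset_card_eq (by rw [card_erase_of_mem (mem_univ i), card_univ]; omega)
  obtain ⟨M, hM, hMsol, hMfour⟩ := exists_modulus_gt_phases S a
  set b : ℕ → ι → ℝ := fun k j => ‖expSum S (f j) id (a j * (k / M))‖
  have hmoment : ∀ j, ∑ k ∈ range M, b k j ^ 4 ≤ M * N ^ 3 := fun j =>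
    (sum_range_norm_expSum_pow_four_le S (f j) ν (hf j) (ha j) (hMfour j)).trans
      (mul_le_mul_of_nonneg_left hE (by positivity))
  have hpointwise : ∀ k,
      ∏ j, b k j ≤ B * (N ^ (Fintype.card ι - 5) * ((∑ j ∈ Q, b k j ^ 4) / 4)) := by
    intro k
    have := prod_le_mul_pow_mul_sum_pow_card (b k) (fun j => norm_nonneg _) (fun j => hFN j _)
      hQi (card_pos.1 (by omega))
    rw [hQ] at this
    exact this.trans (mul_le_mul_of_nonneg_right (hB _) (by positivity))
  refine le_of_mul_le_mul_left ?_ (Nat.cast_pos.2 hM : (0 : ℝ) < M)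
  calc (M : ℝ) * ‖∑ x ∈ (Fintype.piFinset fun _ => S).filter (fun x => ∑ j, a j * x j = 0),
        ∏ j, f j (x j)‖
      = ‖∑ k ∈ range M, ∏ j, expSum S (f j) id (a j * (k / M))‖ := by
        rw [sum_range_prod_expSum S a f M hMsol, norm_mul, norm_natCast]
    _ ≤ ∑ k ∈ range M, ∏ j, b k j :=
        (norm_sum_le _ _).trans_eq (sum_congr rfl fun k _ => norm_prod _ _)
    _ ≤ ∑ k ∈ range M, B * (N ^ (Fintype.card ι - 5) * ((∑ j ∈ Q, b k j ^ 4) / 4)) :=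
        sum_le_sum fun k _ => hpointwise k
    _ = B * N ^ (Fintype.card ι - 5) / 4 * ∑ j ∈ Q, ∑ k ∈ range M, b k j ^ 4 := by
        rw [sum_comm, mul_sum]
        refine sum_congr rfl fun k _ => ?_
        ring
    _ ≤ B * N ^ (Fintype.card ι - 5) / 4 * (4 * (M * N ^ 3)) := by
        gcongr
        · exact div_nonneg (mul_nonneg ((norm_nonneg _).trans (hB 0)) (pow_nonneg hN _))
            zero_le_four
        · simpa [hQ] using sum_le_card_nsmul Q _ _ fun j _ => hmoment j
    _ = M * (N ^ (Fintype.card ι - 2) * B) := by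
        rw [show Fintype.card ι - 2 = Fintype.card ι - 5 + 3 by omega, pow_add]
        ring

theorem counting_lemma_bounded_energy_general (s : ℕ) (hs : 5 ≤ s)
    (a : Fin s → ℤ) (ha : ∀ i, a i ≠ 0)
    (N : ℕ) (c : ℤ)
    (ν : ℤ → ℝ)
    (hmass : ∑ n ∈ Finset.Ico c (c + N), ν n ≤ N)
    (hE : ∑ p ∈ ((Finset.Ico c (c + (N:ℤ))) ×ˢ (Finset.Ico c (c + (N:ℤ))) ×ˢ
        (Finset.Ico c (c + (N:ℤ))) ×ˢ (Finset.Ico c (c + (N:ℤ)))).filter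
        (fun p => p.1 - p.2.1 = p.2.2.1 - p.2.2.2),
        ν p.1 * ν p.2.1 * ν p.2.2.1 * ν p.2.2.2 ≤ (N : ℝ) ^ 3)
    (f : Fin s → ℤ → ℂ) (hf : ∀ i n, ‖f i n‖ ≤ ν n)
    (F : Fin s → ℝ → ℂ)
    (hF : ∀ i (α : ℝ), F i α = ∑ n ∈ Finset.Ico c (c + N),
      f i n * Complex.exp (2 * Real.pi * Complex.I * α * n)) :
    ∀ i, ‖∑ x ∈ (Fintype.piFinset fun _ : Fin s => Finset.Ico c (c + (N:ℤ))).filter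
        (fun x => ∑ j, a j * x j = 0), ∏ j, f j (x j)‖ ≤
      (N : ℝ) ^ (s - 2) * ⨆ α : ℝ, ‖F i α‖ := by
  intro i
  obtain rfl : F = fun j => expSum (Ico c (c + N)) (f j) id := funext₂ hF
  simpa using norm_sum_linear_solutions_le (by simpa using hs) _ a ha N ν hmass hE f hf i

theorem counting_lemma_bounded_energy (s : ℕ) (hs : 5 ≤ s)
    (a : Fin s → ℤ) (ha : ∀ i, a i ≠ 0)
    (N : ℕ) (c : ℤ)
    (ν : ℤ → ℝ) (hν0 : ∀ n, 0 ≤ ν n)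
    (hνsupp : ∀ n, n ∉ Finset.Ico c (c + N) → ν n = 0)
    (hmass : ∑ n ∈ Finset.Ico c (c + N), ν n ≤ N)
    (hE : ∑ p ∈ ((Finset.Ico c (c + (N:ℤ))) ×ˢ (Finset.Ico c (c + (N:ℤ))) ×ˢ
        (Finset.Ico c (c + (N:ℤ))) ×ˢ (Finset.Ico c (c + (N:ℤ)))).filter
        (fun p => p.1 - p.2.1 = p.2.2.1 - p.2.2.2),
        ν p.1 * ν p.2.1 * ν p.2.2.1 * ν p.2.2.2 ≤ (N : ℝ) ^ 3)
    (f : Fin s → ℤ → ℂ) (hf : ∀ i n, ‖f i n‖ ≤ ν n)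
    (F : Fin s → ℝ → ℂ)
    (hF : ∀ i (α : ℝ), F i α = ∑ n ∈ Finset.Ico c (c + N),
      f i n * Complex.exp (2 * Real.pi * Complex.I * α * n)) :
    ∀ i, ‖∑ x ∈ (Fintype.piFinset fun _ : Fin s => Finset.Ico c (c + (N:ℤ))).filter
        (fun x => ∑ j, a j * x j = 0), ∏ j, f j (x j)‖ ≤
      (N : ℝ) ^ (s - 2) * ⨆ α : ℝ, ‖F i α‖ :=
  counting_lemma_bounded_energy_general s hs a ha N c ν hmass hE f hf F hF
end

section
/- Let S ⊆ ℤ be finite, ε > 0, and let B be a finite set of integers such that ‖nα‖ ≤ ε for every n ∈ B and every α in the ε-large spectrum Spec(S, ε) := {α ∈ ℝ/ℤ : |1̂_S(α)| ≥ ε|S|}. Let μ_B := |B|⁻¹ 1_B and f := N^{1/2} · 1_S * μ_B. Then ‖N^{1/2} 1̂_S − f̂‖_∞ ≪ ε N^{1/2} |S|, i.e. sup_α |N^{1/2} 1̂_S(α) − f̂(α)| ≤ C ε N^{1/2}|S| for an absolute constant C. -/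
/-!
The convolution has Fourier transform `√N · 1̂_S · μ̂_B` with `μ̂_B(α) = 𝔼_{n ∈ B} e(nα)`, so the
error at `α` is `√N · 1̂_S(α) · (1 - μ̂_B(α))`. Since `|1 - e(θ)| ≤ 2π‖θ‖ ≤ π`, averaging gives
`|1 - μ̂_B(α)| ≤ 2πε` on `Spec(S, ε)` and `|1 - μ̂_B(α)| ≤ π` everywhere; combined with
`|1̂_S| ≤ |S|` on the spectrum and `|1̂_S| < ε|S|` off it, the error is at most `2πε√N|S|`.
-/

open Finset
open Real
open scoped BigOperators

noncomputable def fourierIndicator (S : Finset ℤ) (α : ℝ) : ℂ :=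
  ∑ m ∈ S, Complex.exp (2 * π * Complex.I * α * m)

lemma norm_fourierIndicator_le (S : Finset ℤ) (α : ℝ) : ‖fourierIndicator S α‖ ≤ #S :=
  (norm_sum_le _ _).trans_eq <| by simp [Complex.norm_exp]

lemma sum_product_mul_exp_add (c : ℂ) (S B : Finset ℤ) (α : ℝ) :
    ∑ p ∈ S ×ˢ B, c * Complex.exp (2 * π * Complex.I * α * (p.1 + p.2)) =
      c * fourierIndicator S α * fourierIndicator B α := by
  rw [fourierIndicator, fourierIndicator, mul_sum S, sum_mul_sum, sum_product]
  refine sum_congr rfl fun m _ => sum_congr rfl fun n _ => ?_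
  rw [mul_add, Complex.exp_add]
  ring

lemma norm_one_sub_exp_two_pi_I_mul_le (θ : ℝ) :
    ‖1 - Complex.exp (2 * π * Complex.I * θ)‖ ≤ 2 * π * |θ - round θ| := by
  have hperiod : Complex.exp (2 * π * Complex.I * θ) =
      Complex.exp (Complex.I * ((2 * π * (θ - round θ) : ℝ) : ℂ)) := by
    rw [show 2 * π * Complex.I * θ = Complex.I * ((2 * π * (θ - round θ) : ℝ) : ℂ) +
        (round θ : ℤ) * (2 * π * Complex.I) by push_cast; ring,
      Complex.exp_add, Complex.exp_int_mul_two_pi_mul_I, mul_one]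
  rw [hperiod, norm_sub_rev]
  refine Real.norm_exp_I_mul_ofReal_sub_one_le.trans_eq ?_
  rw [Real.norm_eq_abs, abs_mul, abs_of_pos two_pi_pos]

lemma norm_sub_expect_le {ι E : Type*} [NormedField E] [CharZero E] [NormedSpace ℝ E]
    {s : Finset ι} (hs : s.Nonempty) {a : E} {f : ι → E} {δ : ℝ} (h : ∀ i ∈ s, ‖a - f i‖ ≤ δ) :
    ‖a - (𝔼 i ∈ s, f i)‖ ≤ δ := by
  rw [← expect_const hs a, ← expect_sub_distrib]
  exact (RCLike.norm_expect_le (K := ℝ)).trans (expect_le hs h)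

lemma norm_one_sub_fourierIndicator_div_card_le {B : Finset ℤ} (hB : B.Nonempty) {α δ : ℝ}
    (h : ∀ n ∈ B, 2 * π * |n * α - round (n * α)| ≤ δ) :
    ‖1 - fourierIndicator B α / #B‖ ≤ δ := by
  rw [fourierIndicator, ← expect_eq_sum_div_card]
  refine norm_sub_expect_le hB fun n hn => (h n hn).trans' ?_
  rw [show (2 * π * Complex.I * α * n : ℂ) = 2 * π * Complex.I * ((n * α : ℝ) : ℂ) by
    push_cast; ring]
  exact norm_one_sub_exp_two_pi_I_mul_le _

lemma norm_fourierIndicator_mul_norm_one_sub_le {S B : Finset ℤ} (hB : B.Nonempty) {ε α : ℝ}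
    (hspec : ε * #S ≤ ‖fourierIndicator S α‖ → ∀ n ∈ B, |n * α - round (n * α)| ≤ ε) :
    ‖fourierIndicator S α‖ * ‖1 - fourierIndicator B α / #B‖ ≤ 2 * π * ε * #S := by
  by_cases hlarge : ε * #S ≤ ‖fourierIndicator S α‖
  · calc ‖fourierIndicator S α‖ * ‖1 - fourierIndicator B α / #B‖
        ≤ #S * (2 * π * ε) :=
          mul_le_mul (norm_fourierIndicator_le S α)
            (norm_one_sub_fourierIndicator_div_card_le hB fun n hn => by
              gcongr; exact hspec hlarge n hn)
            (norm_nonneg _) (Nat.cast_nonneg _)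
      _ = 2 * π * ε * #S := by ring
  · have hsmall := (not_le.1 hlarge).le
    calc ‖fourierIndicator S α‖ * ‖1 - fourierIndicator B α / #B‖
        ≤ ε * #S * π :=
          mul_le_mul hsmall
            (norm_one_sub_fourierIndicator_div_card_le hB fun n _ => by
              nlinarith [abs_sub_round ((n : ℝ) * α), pi_pos])
            (norm_nonneg _) ((norm_nonneg _).trans hsmall)
      _ ≤ 2 * π * ε * #S := by nlinarith [(norm_nonneg _).trans hsmall, pi_pos]

theorem fourier_approx_by_convolution :
    ∃ C : ℝ, 0 < C ∧ ∀ (S B : Finset ℤ), B.Nonempty → ∀ (ε N : ℝ), 0 < ε → 1 ≤ N →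
      (∀ n ∈ B, ∀ α : ℝ,
        ε * S.card ≤ ‖(∑ m ∈ S, Complex.exp (2 * Real.pi * Complex.I * α * m))‖ →
        |(n : ℝ) * α - round ((n : ℝ) * α)| ≤ ε) →
      ∀ α : ℝ,
        ‖((Real.sqrt N : ℂ) *
            (∑ m ∈ S, Complex.exp (2 * Real.pi * Complex.I * α * m)) -
          ∑ p ∈ S ×ˢ B, ((Real.sqrt N / B.card : ℝ) : ℂ) *
            Complex.exp (2 * Real.pi * Complex.I * α * (p.1 + p.2)))‖ ≤
        C * ε * Real.sqrt N * S.card := by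
  refine ⟨2 * π, two_pi_pos, fun S B hB ε N _ _ hspec α => ?_⟩
  have hfactor : (√N : ℂ) * fourierIndicator S α -
      ((√N / #B : ℝ) : ℂ) * fourierIndicator S α * fourierIndicator B α =
        (√N : ℂ) * (fourierIndicator S α * (1 - fourierIndicator B α / #B)) := by
    push_cast
    ring
  rw [sum_product_mul_exp_add]
  change ‖(√N : ℂ) * fourierIndicator S α - _‖ ≤ _
  rw [hfactor, norm_mul, norm_mul, Complex.norm_real, Real.norm_of_nonneg (sqrt_nonneg N)]
  calc √N * (‖fourierIndicator S α‖ * ‖1 - fourierIndicator B α / #B‖)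
      ≤ √N * (2 * π * ε * #S) :=
        mul_le_mul_of_nonneg_left
          (norm_fourierIndicator_mul_norm_one_sub_le hB fun hα n hn => hspec n hn α hα)
          (sqrt_nonneg N)
    _ = 2 * π * ε * √N * #S := by ring
end

section
/- Let S, B ⊆ ℤ be finite sets with B nonempty, and suppose E(S) ≤ (2 + η)|S|² with η ∈ [0, 1]. Then Σ_n r_S(n) r_B(n) ≤ |B|² + (η|S|² + 2|S|)|B|. -/
/-!
For every `n` one has `r_S(n) r_B(n) + |B| r_S(n) ≤ r_B(n) + |B| r_S(n)²`: this is clear when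
`r_S(n) ≤ 1`, and when `r_S(n) ≥ 2` it follows from `r_B(n) ≤ |B|` and `2 r_S(n) ≤ r_S(n)²`.
Sum it over the nonzero differences of `S`, where `Σ r_S = |S|² - |S|`, `Σ r_S² = E(S) - |S|²`
and `Σ r_B ≤ |B|² - |B|`, and add back the term `r_S(0) r_B(0) = |S| |B|`.
-/

open Finset
open scoped Classical

namespace Finset

variable {ι κ : Type*} [DecidableEq κ]

lemma card_filter_apply_eq_apply_eq_sum_sq (s : Finset ι) (f : ι → κ) :
    #{q ∈ s ×ˢ s | f q.1 = f q.2} = ∑ b ∈ s.image f, #{a ∈ s | f a = b} ^ 2 := by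
  rw [card_eq_sum_card_fiberwise (f := fun q => f q.1) (t := s.image f)
    (fun q hq => by simp only [coe_filter, mem_product] at hq; exact mem_image_of_mem f hq.1.1)]
  refine sum_congr rfl fun b _ => ?_
  rw [sq, ← card_product, filter_filter]
  congr 1
  ext q
  simp only [mem_filter, mem_product]
  grind

end Finset

lemma mul_add_mul_le_add_mul_sq {r b c : ℕ} (hb : b ≤ c) : r * b + c * r ≤ b + c * r ^ 2 := by
  rcases Nat.lt_or_ge r 2 with hr | hr
  · interval_cases r <;> simp
  · nlinarith [Nat.mul_le_mul_left r hb, Nat.mul_le_mul_left (c * r) hr]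

section RepDiff

variable {G : Type*} [AddGroup G] [DecidableEq G]

def repDiff (A : Finset G) (n : G) : ℕ := #{p ∈ A ×ˢ A | p.1 - p.2 = n}

def diffEnergy (A : Finset G) : ℕ :=
  #{p ∈ A ×ˢ A ×ˢ A ×ˢ A | p.1 - p.2.1 = p.2.2.1 - p.2.2.2}

lemma repDiff_le_card (A : Finset G) (n : G) : repDiff A n ≤ #A :=
  card_le_card_of_injOn Prod.fst (fun p hp => (mem_product.mp (mem_filter.mp hp).1).1)
    fun p hp q hq h => by
      simp only [coe_filter, mem_product, Set.mem_ofPred_eq] at hp hq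
      exact Prod.ext h (sub_right_inj.mp (by rw [hp.2, h, hq.2]))

lemma repDiff_zero (A : Finset G) : repDiff A 0 = #A := by
  rw [repDiff, filter_congr fun p _ => sub_eq_zero, ← diag_eq_filter, diag_card]

lemma sum_repDiff (A : Finset G) :
    ∑ n ∈ (A ×ˢ A).image (fun p => p.1 - p.2), repDiff A n = #A ^ 2 := by
  rw [sq, ← card_product]
  exact (card_eq_sum_card_image _ _).symm

lemma sum_repDiff_le (A D : Finset G) : ∑ n ∈ D, repDiff A n ≤ #A ^ 2 := by
  rw [sq, ← card_product]
  exact (sum_card_fiberwise_eq_card_filter _ _ _).trans_le (card_filter_le _ _)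

lemma diffEnergy_eq_sum_sq (A : Finset G) :
    diffEnergy A = ∑ n ∈ (A ×ˢ A).image (fun p => p.1 - p.2), repDiff A n ^ 2 := by
  calc diffEnergy A = #{q ∈ (A ×ˢ A) ×ˢ (A ×ˢ A) | q.1.1 - q.1.2 = q.2.1 - q.2.2} :=
        (card_equiv (Equiv.prodAssoc G G (G × G)) (by simp [and_assoc])).symm
    _ = _ := card_filter_apply_eq_apply_eq_sum_sq (A ×ˢ A) (fun p => p.1 - p.2)

lemma zero_mem_image_sub {A : Finset G} (hA : A.Nonempty) :
    (0 : G) ∈ (A ×ˢ A).image (fun p => p.1 - p.2) := by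
  obtain ⟨a, ha⟩ := hA
  exact mem_image.mpr ⟨(a, a), mem_product.mpr ⟨ha, ha⟩, sub_self a⟩

lemma sum_repDiff_mul_add_le (S B D : Finset G) :
    ∑ n ∈ D, repDiff S n * repDiff B n + #B * ∑ n ∈ D, repDiff S n ≤
      ∑ n ∈ D, repDiff B n + #B * ∑ n ∈ D, repDiff S n ^ 2 := by
  simp only [mul_sum, ← sum_add_distrib]
  exact sum_le_sum fun n _ => mul_add_mul_le_add_mul_sq (repDiff_le_card B n)

lemma sum_repDiff_mul_repDiff_add_le (S B : Finset G) :
    ∑ n ∈ (S ×ˢ S).image (fun p => p.1 - p.2), repDiff S n * repDiff B n + #B +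
        2 * #B * #S ^ 2 ≤ #B ^ 2 + #B * (diffEnergy S + 2 * #S) := by
  obtain rfl | hS := S.eq_empty_or_nonempty
  · simpa [diffEnergy] using Nat.le_self_pow two_ne_zero #B
  set D := (S ×ˢ S).image (fun p => p.1 - p.2)
  have hD := zero_mem_image_sub hS
  have hsum := sum_repDiff S
  have hsq := diffEnergy_eq_sum_sq S
  have hB := sum_repDiff_le B (insert 0 (D.erase 0))
  have key := sum_repDiff_mul_add_le S B (D.erase 0)
  rw [← add_sum_erase _ _ hD] at hsum hsq ⊢
  rw [sum_insert (notMem_erase 0 D)] at hB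
  simp only [repDiff_zero] at hsum hsq hB ⊢
  linarith [congrArg (#B * ·) hsum, congrArg (#B * ·) hsq]

end RepDiff

theorem rep_correlation_bound_general (S B : Finset ℤ)
    (η : ℝ)
    (hE : ((((S ×ˢ S ×ˢ S ×ˢ S).filter
        (fun p => p.1 - p.2.1 = p.2.2.1 - p.2.2.2)).card : ℝ)) ≤ (2 + η) * S.card ^ 2) :
    ∑ n ∈ (S ×ˢ S).image (fun p : ℤ × ℤ => p.1 - p.2),
        (((S ×ˢ S).filter (fun p => p.1 - p.2 = n)).card : ℝ) *
        (((B ×ˢ B).filter (fun p => p.1 - p.2 = n)).card : ℝ) ≤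
      (B.card : ℝ) ^ 2 + (η * S.card ^ 2 + 2 * S.card) * B.card := by
  have key := sum_repDiff_mul_repDiff_add_le S B
  rw [← Nat.cast_le (α := ℝ)] at key
  push_cast [repDiff, diffEnergy] at key
  have hB : (0 : ℝ) ≤ #B := Nat.cast_nonneg _
  linarith [mul_le_mul_of_nonneg_left hE hB]

theorem rep_correlation_bound (S B : Finset ℤ) (hB : B.Nonempty)
    (η : ℝ) (hη0 : 0 ≤ η) (hη1 : η ≤ 1)
    (hE : ((((S ×ˢ S ×ˢ S ×ˢ S).filter
        (fun p => p.1 - p.2.1 = p.2.2.1 - p.2.2.2)).card : ℝ)) ≤ (2 + η) * S.card ^ 2) :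
    ∑ n ∈ (S ×ˢ S).image (fun p : ℤ × ℤ => p.1 - p.2),
        (((S ×ˢ S).filter (fun p => p.1 - p.2 = n)).card : ℝ) *
        (((B ×ˢ B).filter (fun p => p.1 - p.2 = n)).card : ℝ) ≤
      (B.card : ℝ) ^ 2 + (η * S.card ^ 2 + 2 * S.card) * B.card :=
  rep_correlation_bound_general S B η hE
end

section
/- Let s ≥ 5, let a₁, ..., a_s be nonzero integers, η ≤ 1/2, and let S ⊆ {1, ..., N} satisfy E(S) ≤ (2 + η)|S|². Then the number of solutions (x₁, ..., x_s) ∈ S^s to a₁x₁ + ... + a_s x_s = 0 in which some two coordinates x_i, x_j (i ≠ j) are equal is O_s(N^{s/2 − 5/4}). -/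
/-!
Fix a pair i ≠ j with x_i = x_j and three further indices k₁, k₂, k₃. The s - 4 coordinates
outside {j, k₁, k₂, k₃} determine n = a_{k₁} x_{k₁} + a_{k₂} x_{k₂} + a_{k₃} x_{k₃}, and by
Cauchy–Schwarz (applied twice) a three-term equation b₁x₁ + b₂x₂ + b₃x₃ = n has at most
(|S| E(S))^{1/2} solutions in S³. Cauchy–Schwarz over S + S ⊆ [2, 2N] gives |S|⁴ ≤ 2N E(S), so the
hypothesis E(S) ≤ (5/2)|S|² forces |S|² ≤ 5N. Altogether the count is at most
s² |S|^{s-4} (|S| E(S))^{1/2} ≪ |S|^{s - 5/2} ≪ N^{s/2 - 5/4}.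
-/

open Finset
open scoped Classical

open scoped Combinatorics.Additive Pointwise

namespace Finset

section Matching

variable {α β γ : Type*} [DecidableEq γ]

theorem card_filter_product_eq_sum_mul {s : Finset α} (t : Finset β) {f : α → γ} (g : β → γ)
    {u : Finset γ} (hu : Set.MapsTo f s u) :
    #{p ∈ s ×ˢ t | f p.1 = g p.2} = ∑ c ∈ u, #{a ∈ s | f a = c} * #{b ∈ t | g b = c} := by
  rw [card_eq_sum_card_fiberwise (f := fun p => f p.1) (t := u)
    fun p hp => hu (mem_product.1 (mem_filter.1 hp).1).1]
  refine sum_congr rfl fun c _ => ?_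
  rw [filter_filter, ← card_product, ← filter_product]
  congr 1
  refine filter_congr fun p _ => ?_
  constructor
  · rintro ⟨h, rfl⟩; exact ⟨rfl, h.symm⟩
  · rintro ⟨rfl, h⟩; exact ⟨h.symm, rfl⟩

theorem card_filter_product_eq_sq_le (s : Finset α) (t : Finset β) (f : α → γ) (g : β → γ) :
    #{p ∈ s ×ˢ t | f p.1 = g p.2} ^ 2 ≤
      #{p ∈ s ×ˢ s | f p.1 = f p.2} * #{p ∈ t ×ˢ t | g p.1 = g p.2} := by
  set u := s.image f ∪ t.image g
  have hs : Set.MapsTo f s u := fun a ha => mem_union_left _ (mem_image_of_mem f ha)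
  have ht : Set.MapsTo g t u := fun b hb => mem_union_right _ (mem_image_of_mem g hb)
  rw [card_filter_product_eq_sum_mul t g hs, card_filter_product_eq_sum_mul s f hs,
    card_filter_product_eq_sum_mul t g ht]
  simpa only [sq] using sum_mul_sq_le_sq_mul_sq u (fun c => #{a ∈ s | f a = c})
    fun c => #{b ∈ t | g b = c}

end Matching

section AddCommGroup

variable {G : Type*} [AddCommGroup G] [DecidableEq G]

theorem addEnergy_eq_card_filter_sub_eq_sub (S : Finset G) :
    E[S] = #{p ∈ (S ×ˢ S) ×ˢ (S ×ˢ S) | p.1.1 - p.1.2 = p.2.1 - p.2.2} :=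
  card_equiv ((Equiv.refl _).prodCongr (Equiv.prodComm _ _)) fun p => by
    simp only [mem_filter, mem_product, Equiv.prodCongr_apply, Equiv.coe_refl, Prod.map_fst,
      Prod.map_snd, id_eq, Equiv.prodComm_apply, Prod.fst_swap, Prod.snd_swap,
      sub_eq_sub_iff_add_eq_add, add_comm p.2.2]
    tauto

theorem addEnergy_eq_card_filter_sub_eq_sub' (S : Finset G) :
    E[S] = #{p ∈ S ×ˢ S ×ˢ S ×ˢ S | p.1 - p.2.1 = p.2.2.1 - p.2.2.2} := by
  rw [addEnergy_eq_card_filter_sub_eq_sub]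
  exact card_equiv (Equiv.prodAssoc _ _ _) fun p => by simp [and_assoc]

end AddCommGroup

section Domain

variable {R : Type*} [CommRing R] [IsDomain R] [DecidableEq R]

theorem card_filter_mul_sub_eq_mul_sub_le_addEnergy (S : Finset R) {c d : R} (hc : c ≠ 0)
    (hd : d ≠ 0) :
    #{p ∈ (S ×ˢ S) ×ˢ (S ×ˢ S) | c * (p.1.1 - p.1.2) = d * (p.2.1 - p.2.2)} ≤ E[S] := by
  have hdil : ∀ b : R, b ≠ 0 →
      #{p ∈ (S ×ˢ S) ×ˢ (S ×ˢ S) | b * (p.1.1 - p.1.2) = b * (p.2.1 - p.2.2)} = E[S] :=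
    fun b hb => by
      rw [addEnergy_eq_card_filter_sub_eq_sub]
      exact congrArg card (filter_congr fun p _ => mul_right_inj' hb)
  refine le_of_pow_le_pow_left₀ two_ne_zero (Nat.zero_le _) ?_
  calc _ ≤ _ := card_filter_product_eq_sq_le (S ×ˢ S) (S ×ˢ S) (fun q => c * (q.1 - q.2))
          fun q => d * (q.1 - q.2)
    _ = E[S] ^ 2 := by rw [hdil c hc, hdil d hd, sq]

theorem card_filter_linear_three_sq_le (S : Finset R) {b₁ b₂ b₃ : R} (h₁ : b₁ ≠ 0)
    (h₂ : b₂ ≠ 0) (h₃ : b₃ ≠ 0) (n : R) :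
    #{p ∈ S ×ˢ S ×ˢ S | b₁ * p.1 + b₂ * p.2.1 + b₃ * p.2.2 = n} ^ 2 ≤ #S * E[S] := by
  -- Cauchy–Schwarz in x₁ leaves the pairs with b₂(y - y') = -b₃(z - z'), which a second
  -- Cauchy–Schwarz compares with the energy.
  have hCS := card_filter_product_eq_sq_le S (S ×ˢ S) (fun x => b₁ * x)
    fun q => n - (b₂ * q.1 + b₃ * q.2)
  have hsol : #{p ∈ S ×ˢ S ×ˢ S | b₁ * p.1 + b₂ * p.2.1 + b₃ * p.2.2 = n} =
      #{p ∈ S ×ˢ S ×ˢ S | b₁ * p.1 = n - (b₂ * p.2.1 + b₃ * p.2.2)} :=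
    congrArg card <| filter_congr fun p _ => by rw [add_assoc, eq_sub_iff_add_eq]
  have hdiag : #{p ∈ S ×ˢ S | b₁ * p.1 = b₁ * p.2} = #S := by
    rw [filter_congr fun p _ => mul_right_inj' h₁, ← diag_eq_filter, diag_card]
  have hpairs : #{p ∈ (S ×ˢ S) ×ˢ (S ×ˢ S) |
        n - (b₂ * p.1.1 + b₃ * p.1.2) = n - (b₂ * p.2.1 + b₃ * p.2.2)} =
      #{p ∈ (S ×ˢ S) ×ˢ (S ×ˢ S) | b₂ * (p.1.1 - p.1.2) = -b₃ * (p.2.1 - p.2.2)} :=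
    card_equiv (Equiv.prodProdProdComm _ _ _ _) fun p => by
      simp only [mem_filter, mem_product, Equiv.prodProdProdComm_apply, sub_right_inj]
      constructor <;> rintro ⟨hmem, h⟩ <;> refine ⟨by tauto, by linear_combination h⟩
  rw [hsol]
  calc _ ≤ #S * #{p ∈ (S ×ˢ S) ×ˢ (S ×ˢ S) |
        n - (b₂ * p.1.1 + b₃ * p.1.2) = n - (b₂ * p.2.1 + b₃ * p.2.2)} := hdiag ▸ hCS
    _ ≤ #S * E[S] := by
      rw [hpairs]
      exact Nat.mul_le_mul_left _
        (card_filter_mul_sub_eq_mul_sub_le_addEnergy S h₂ (neg_ne_zero.2 h₃))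

end Domain

section Solutions

variable {R : Type*} [CommRing R] [IsDomain R] [DecidableEq R] {s : ℕ} {a : Fin s → R}

theorem card_le_sqrt_of_eqOn_compl_three {S : Finset R} (ha : ∀ l, a l ≠ 0)
    {k₁ k₂ k₃ : Fin s} (h₁₂ : k₁ ≠ k₂) (h₁₃ : k₁ ≠ k₃) (h₂₃ : k₂ ≠ k₃) {A : Finset (Fin s → R)}
    (hA : ∀ x ∈ A, (∀ l, x l ∈ S) ∧ ∑ l, a l * x l = 0)
    (hagree : ∀ x ∈ A, ∀ y ∈ A, ∀ l ∉ ({k₁, k₂, k₃} : Finset (Fin s)), x l = y l) :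
    #A ≤ Nat.sqrt (#S * E[S]) := by
  obtain rfl | ⟨x₀, hx₀⟩ := A.eq_empty_or_nonempty
  · simp
  set V : Finset (Fin s) := {k₁, k₂, k₃}
  have hsumV (x : Fin s → R) :
      ∑ l ∈ V, a l * x l = a k₁ * x k₁ + a k₂ * x k₂ + a k₃ * x k₃ := by
    rw [sum_insert (by simp [h₁₂, h₁₃]), sum_pair h₂₃, add_assoc]
  rw [Nat.le_sqrt']
  refine le_trans (pow_le_pow_left₀ (Nat.zero_le _) ?_ 2)
    (card_filter_linear_three_sq_le S (ha k₁) (ha k₂) (ha k₃) (-∑ l ∈ Vᶜ, a l * x₀ l))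
  refine card_le_card_of_injOn (fun x => (x k₁, x k₂, x k₃)) (fun x hx => ?_)
    fun x hx y hy hxy => ?_
  · obtain ⟨hS, hsum⟩ := hA x hx
    have hcompl : ∑ l ∈ Vᶜ, a l * x₀ l = ∑ l ∈ Vᶜ, a l * x l :=
      sum_congr rfl fun l hl => by rw [hagree x₀ hx₀ x hx l (mem_compl.1 hl)]
    simp only [coe_filter, mem_product]
    refine ⟨⟨hS _, hS _, hS _⟩, ?_⟩
    rw [← hsumV, hcompl, eq_neg_iff_add_eq_zero, sum_add_sum_compl, hsum]
  · simp only [Prod.mk.injEq] at hxy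
    funext l
    by_cases hl : l ∈ V
    · simp only [V, mem_insert, mem_singleton] at hl
      rcases hl with rfl | rfl | rfl <;> tauto
    · exact hagree x hx y hy l hl

theorem card_filter_sum_eq_zero_and_eq_le (hs : 5 ≤ s) (ha : ∀ l, a l ≠ 0) (S : Finset R)
    {i j : Fin s} (hij : i ≠ j) :
    #{x ∈ Fintype.piFinset fun _ => S | ∑ l, a l * x l = 0 ∧ x i = x j} ≤
      Nat.sqrt (#S * E[S]) * #S ^ (s - 4) := by
  obtain ⟨V, hV, hV3⟩ := exists_subset_card_eq (s := univ \ {i, j}) (n := 3) <| by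
    rw [card_sdiff_of_subset (subset_univ _), card_univ, Fintype.card_fin]
    have := card_le_two (a := i) (b := j)
    omega
  obtain ⟨k₁, k₂, k₃, h₁₂, h₁₃, h₂₃, rfl⟩ := card_eq_three.1 hV3
  set K : Finset (Fin s) := insert j {k₁, k₂, k₃}
  have hjV : j ∉ ({k₁, k₂, k₃} : Finset (Fin s)) := fun h => by simpa using hV h
  have hiV : i ∉ ({k₁, k₂, k₃} : Finset (Fin s)) := fun h => by simpa using hV h
  have hiK : i ∉ K := fun h => (mem_insert.1 h).elim hij hiV
  have hK : #Kᶜ = s - 4 := by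
    rw [card_compl, Fintype.card_fin, card_insert_of_notMem hjV, hV3]
  refine (card_le_mul_card_image_of_maps_to (f := fun x (l : ↥Kᶜ) => x l)
    (t := Fintype.piFinset fun _ => S) ?_ (Nat.sqrt (#S * E[S])) fun y _ => ?_).trans_eq ?_
  · intro x hx
    simp only [mem_filter, Fintype.mem_piFinset] at hx ⊢
    exact fun l => hx.1 l
  · refine card_le_sqrt_of_eqOn_compl_three ha h₁₂ h₁₃ h₂₃ (fun x hx => ?_)
      fun x hx x' hx' l hl => ?_
    · simp only [mem_filter, Fintype.mem_piFinset] at hx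
      exact ⟨hx.1.1, hx.1.2.1⟩
    · simp only [mem_filter] at hx hx'
      have hrestr : ∀ m ∉ K, x m = x' m := fun m hm =>
        congrFun (hx.2.trans hx'.2.symm) ⟨m, mem_compl.2 hm⟩
      -- off K the restrictions agree, and x j = x i with i ∉ K
      by_cases hlj : l = j
      · rw [hlj, ← hx.1.2.2, ← hx'.1.2.2, hrestr i hiK]
      · exact hrestr l (by simp [K, hlj, hl])
  · rw [Fintype.card_piFinset, prod_const, card_univ, Fintype.card_coe, hK]

theorem card_filter_sum_eq_zero_and_exists_ne_eq_le (hs : 5 ≤ s) (ha : ∀ l, a l ≠ 0)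
    (S : Finset R) :
    #{x ∈ Fintype.piFinset fun _ => S | ∑ l, a l * x l = 0 ∧ ∃ i j, i ≠ j ∧ x i = x j} ≤
      s ^ 2 * (Nat.sqrt (#S * E[S]) * #S ^ (s - 4)) := by
  calc _ ≤ #((univ : Finset (Fin s)).offDiag.biUnion fun q =>
        {x ∈ Fintype.piFinset fun _ => S | ∑ l, a l * x l = 0 ∧ x q.1 = x q.2}) := by
        refine card_le_card fun x hx => ?_
        simp only [mem_filter, mem_biUnion, mem_offDiag] at hx ⊢
        obtain ⟨hxS, hsum, i, j, hij, hxij⟩ := hx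
        exact ⟨(i, j), ⟨mem_univ _, mem_univ _, hij⟩, hxS, hsum, hxij⟩
    _ ≤ #(univ : Finset (Fin s)).offDiag * (Nat.sqrt (#S * E[S]) * #S ^ (s - 4)) :=
        card_biUnion_le_card_mul _ _ _ fun q hq =>
          card_filter_sum_eq_zero_and_eq_le hs ha S (mem_offDiag.1 hq).2.2
    _ ≤ s ^ 2 * (Nat.sqrt (#S * E[S]) * #S ^ (s - 4)) := by
        rw [offDiag_card, card_univ, Fintype.card_fin, sq]
        exact Nat.mul_le_mul_right _ (Nat.sub_le _ _)

end Solutions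

theorem card_pow_four_le_mul_addEnergy {S : Finset ℤ} {N : ℕ} (hS : S ⊆ Icc 1 (N : ℤ)) :
    #S ^ 4 ≤ 2 * N * E[S] := by
  have hSS : S + S ⊆ Icc 2 (2 * N : ℤ) := by
    convert (add_subset_add hS hS).trans (Icc_add_Icc_subset _ _ _ _) using 2 <;> ring
  calc #S ^ 4 = #S ^ 2 * #S ^ 2 := by ring
    _ ≤ #(S + S) * E[S] := le_card_add_mul_addEnergy S S
    _ ≤ 2 * N * E[S] := by
      gcongr
      refine (card_le_card hSS).trans ?_
      rw [Int.card_Icc]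
      omega

theorem card_sq_le_of_addEnergy_le {S : Finset ℤ} {N : ℕ} (hS : S ⊆ Icc 1 (N : ℤ)) {c : ℝ}
    (hc : 0 ≤ c) (hE : (E[S] : ℝ) ≤ c * #S ^ 2) : (#S : ℝ) ^ 2 ≤ 2 * c * N := by
  obtain hS0 | hSpos := (Nat.zero_le #S).eq_or_lt
  · rw [← hS0, Nat.cast_zero, zero_pow two_ne_zero]; positivity
  have h4 : (#S : ℝ) ^ 4 ≤ 2 * N * E[S] := by exact_mod_cast card_pow_four_le_mul_addEnergy hS
  have hpos : (0 : ℝ) < #S ^ 2 := by positivity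
  refine le_of_mul_le_mul_right ?_ hpos
  calc (#S : ℝ) ^ 2 * #S ^ 2 = #S ^ 4 := by ring
    _ ≤ 2 * N * (c * #S ^ 2) := h4.trans (by gcongr)
    _ = 2 * c * N * #S ^ 2 := by ring

end Finset

theorem sqrt_mul_mul_pow_le_rpow {M E c D : ℝ} {s : ℕ} (hs : 4 ≤ s) (hM : 0 ≤ M) (hc : 0 ≤ c)
    (hE : E ≤ c * M ^ 2) (hMD : M ^ 2 ≤ D) :
    √(M * E) * M ^ (s - 4) ≤ √c * D ^ ((s : ℝ) / 2 - 5 / 4) := by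
  have hs₄ : (4 : ℝ) ≤ s := by exact_mod_cast hs
  have hexp : √(M ^ 3) * M ^ (s - 4) = (M ^ 2) ^ ((s : ℝ) / 2 - 5 / 4) := by
    have hs' : ((s - 4 : ℕ) : ℝ) = s - 4 := by push_cast [hs]; ring
    rw [Real.sqrt_eq_rpow, ← Real.rpow_natCast M 3, ← Real.rpow_natCast M (s - 4),
      ← Real.rpow_natCast M 2, ← Real.rpow_mul hM, ← Real.rpow_mul hM, ← Real.rpow_add' hM,
      hs']
    · congr 1; push_cast; ring
    · rw [hs']; push_cast; linarith
  calc √(M * E) * M ^ (s - 4) ≤ √(c * M ^ 3) * M ^ (s - 4) := by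
        refine mul_le_mul_of_nonneg_right (Real.sqrt_le_sqrt ?_) (by positivity)
        nlinarith [mul_le_mul_of_nonneg_left hE hM]
    _ = √c * (M ^ 2) ^ ((s : ℝ) / 2 - 5 / 4) := by rw [Real.sqrt_mul hc, mul_assoc, hexp]
    _ ≤ √c * D ^ ((s : ℝ) / 2 - 5 / 4) := by
        gcongr
        linarith

theorem degenerate_solutions_bound (s : ℕ) (hs : 5 ≤ s) :
    ∃ C : ℝ, 0 < C ∧ ∀ (a : Fin s → ℤ), (∀ i, a i ≠ 0) → ∀ η : ℝ, η ≤ 1 / 2 →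
      ∀ (N : ℕ) (S : Finset ℤ), S ⊆ Finset.Icc 1 (N : ℤ) →
      ((((S ×ˢ S ×ˢ S ×ˢ S).filter
          (fun p => p.1 - p.2.1 = p.2.2.1 - p.2.2.2)).card : ℝ)) ≤ (2 + η) * S.card ^ 2 →
      (((Fintype.piFinset fun _ : Fin s => S).filter
          (fun x => (∑ j, a j * x j = 0) ∧ ∃ i j, i ≠ j ∧ x i = x j)).card : ℝ) ≤
        C * (N : ℝ) ^ ((s : ℝ) / 2 - 5 / 4) := by
  refine ⟨2 * s ^ 2 * 5 ^ ((s : ℝ) / 2 - 5 / 4), by positivity, ?_⟩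
  intro a ha η hη N S hS hE
  rw [← addEnergy_eq_card_filter_sub_eq_sub'] at hE
  have hE' : (E[S] : ℝ) ≤ 5 / 2 * #S ^ 2 := hE.trans (by gcongr; linarith)
  have hsize : (#S : ℝ) ^ 2 ≤ 5 * N := by
    have := card_sq_le_of_addEnergy_le hS (by norm_num) hE'
    linarith
  have hsqrt : √(5 / 2 : ℝ) ≤ 2 := by
    rw [Real.sqrt_le_left (by norm_num)]; norm_num
  calc _ ≤ (s ^ 2 * (Nat.sqrt (#S * E[S]) * #S ^ (s - 4)) : ℝ) := by
        exact_mod_cast card_filter_sum_eq_zero_and_exists_ne_eq_le hs ha S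
    _ ≤ s ^ 2 * (√(#S * E[S]) * #S ^ (s - 4)) := by
        gcongr
        exact_mod_cast Real.nat_sqrt_le_real_sqrt
    _ ≤ s ^ 2 * (√(5 / 2) * (5 * N) ^ ((s : ℝ) / 2 - 5 / 4)) :=
        mul_le_mul_of_nonneg_left (sqrt_mul_mul_pow_le_rpow (s := s) (by omega) (by positivity)
          (by norm_num) hE' hsize) (by positivity)
    _ ≤ s ^ 2 * (5 ^ ((s : ℝ) / 2 - 5 / 4) * N ^ ((s : ℝ) / 2 - 5 / 4)) * 2 := by
        rw [Real.mul_rpow (by norm_num) (by positivity), mul_left_comm, mul_comm]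
        gcongr
    _ = _ := by ring
end
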